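/- arXiv:1309.7217 — 3 statements merged into one kernel-verified Lean document; each statement's English description precedes it below -/
import Mathlib

section
/- Existence of the critical exponent for inelastic Maxwell molecules (Lemma 3.4): Let δ ∈ (0,1/2) and let ψ be a random variable with values in (0,π) whose law is absolutely continuous with respect to Lebesgue measure. Define r⁻ = 2^{−1/2}(1−δ)√(1−cos ψ) and r⁺ = 2^{−1/2}√((1+δ²)+(1−δ²)cos ψ). Then there exists a unique α ∈ (0,2) such that E[(r⁺)^α + (r⁻)^α] = 1; moreover, for this α and every γ > 1, E[(r⁺)^{αγ} + (r⁻)^{αγ}] < 1. -/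
open MeasureTheory Real Set

/-!
Almost surely `0 < r± < 1`, so `φ(α) = E[(r⁺)^α + (r⁻)^α]` is strictly decreasing and (by
dominated convergence, with bound `2`) continuous on `[0, ∞)`. Moreover `φ(0) = 2` and
`(r⁺)² + (r⁻)² = 1 - δ(1 - δ)(1 - cos ψ) < 1`, so `φ(2) < 1`. The intermediate value theorem
yields `α ∈ (0, 2)` with `φ(α) = 1`; strict monotonicity makes it unique and gives
`φ(αγ) < φ(α) = 1` for `γ > 1`.
-/

section Moments

variable {Ω : Type*} [MeasurableSpace Ω] {P : Measure Ω}

theorem integral_lt_integral_of_ae_lt [NeZero P] {f g : Ω → ℝ} (hf : Integrable f P)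
    (hg : Integrable g P) (h : ∀ᵐ ω ∂P, f ω < g ω) : ∫ ω, f ω ∂P < ∫ ω, g ω ∂P := by
  rw [← sub_pos, ← integral_sub hg hf,
    integral_pos_iff_support_of_nonneg_ae (h.mono fun ω hω => (sub_pos.2 hω).le) (hg.sub hf),
    pos_iff_ne_zero]
  intro hzero
  obtain ⟨ω, hω, hω'⟩ := (h.and (measure_eq_zero_iff_ae_notMem.1 hzero)).exists
  exact hω' (sub_pos.2 hω).ne'

variable {X Y : Ω → ℝ}

theorem integrable_rpow_add_rpow [IsFiniteMeasure P] (hX : AEMeasurable X P)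
    (hY : AEMeasurable Y P) (hX01 : ∀ᵐ ω ∂P, X ω ∈ Ioo 0 1) (hY01 : ∀ᵐ ω ∂P, Y ω ∈ Ioo 0 1)
    {α : ℝ} (hα : 0 ≤ α) : Integrable (fun ω => X ω ^ α + Y ω ^ α) P := by
  refine (integrable_const (2 : ℝ)).mono'
    ((hX.pow_const α).add (hY.pow_const α)).aestronglyMeasurable ?_
  filter_upwards [hX01, hY01] with ω ⟨hX0, hX1⟩ ⟨hY0, hY1⟩
  rw [Real.norm_of_nonneg (by positivity)]
  linarith [rpow_le_one hX0.le hX1.le hα, rpow_le_one hY0.le hY1.le hα]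

theorem strictAntiOn_integral_rpow_add_rpow [IsFiniteMeasure P] [NeZero P]
    (hX : AEMeasurable X P) (hY : AEMeasurable Y P) (hX01 : ∀ᵐ ω ∂P, X ω ∈ Ioo 0 1)
    (hY01 : ∀ᵐ ω ∂P, Y ω ∈ Ioo 0 1) :
    StrictAntiOn (fun α : ℝ => ∫ ω, (X ω ^ α + Y ω ^ α) ∂P) (Ici 0) := by
  intro a ha b hb hab
  refine integral_lt_integral_of_ae_lt (integrable_rpow_add_rpow (α := b) hX hY hX01 hY01 hb)
    (integrable_rpow_add_rpow (α := a) hX hY hX01 hY01 ha) ?_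
  filter_upwards [hX01, hY01] with ω ⟨hX0, hX1⟩ ⟨hY0, hY1⟩
  exact add_lt_add (rpow_lt_rpow_of_exponent_gt hX0 hX1 hab)
    (rpow_lt_rpow_of_exponent_gt hY0 hY1 hab)

theorem continuousOn_integral_rpow_add_rpow [IsFiniteMeasure P]
    (hX : AEMeasurable X P) (hY : AEMeasurable Y P) (hX01 : ∀ᵐ ω ∂P, X ω ∈ Ioo 0 1)
    (hY01 : ∀ᵐ ω ∂P, Y ω ∈ Ioo 0 1) :
    ContinuousOn (fun α : ℝ => ∫ ω, (X ω ^ α + Y ω ^ α) ∂P) (Ici 0) := by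
  refine continuousOn_of_dominated (bound := fun _ => 2)
    (fun α _ => ((hX.pow_const α).add (hY.pow_const α)).aestronglyMeasurable) ?_
    (integrable_const 2) ?_
  · intro α hα
    filter_upwards [hX01, hY01] with ω ⟨hX0, hX1⟩ ⟨hY0, hY1⟩
    rw [Real.norm_of_nonneg (by positivity)]
    linarith [rpow_le_one hX0.le hX1.le (mem_Ici.1 hα), rpow_le_one hY0.le hY1.le (mem_Ici.1 hα)]
  · filter_upwards [hX01, hY01] with ω ⟨hX0, _⟩ ⟨hY0, _⟩
    exact (continuous_const_rpow hX0.ne').continuousOn.add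
      (continuous_const_rpow hY0.ne').continuousOn

theorem exists_unique_critical_exponent [IsProbabilityMeasure P]
    (hX : AEMeasurable X P) (hY : AEMeasurable Y P) (hX01 : ∀ᵐ ω ∂P, X ω ∈ Ioo 0 1)
    (hY01 : ∀ᵐ ω ∂P, Y ω ∈ Ioo 0 1) {β : ℝ} (hβ : 0 < β)
    (hβ1 : ∫ ω, (X ω ^ β + Y ω ^ β) ∂P < 1) :
    ∃ α ∈ Ioo 0 β, ∫ ω, (X ω ^ α + Y ω ^ α) ∂P = 1 ∧
      (∀ α' ∈ Ioo 0 β, ∫ ω, (X ω ^ α' + Y ω ^ α') ∂P = 1 → α' = α) ∧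
      ∀ γ, 1 < γ → ∫ ω, (X ω ^ (α * γ) + Y ω ^ (α * γ)) ∂P < 1 := by
  have hanti := strictAntiOn_integral_rpow_add_rpow hX hY hX01 hY01
  have hcont := (continuousOn_integral_rpow_add_rpow hX hY hX01 hY01).mono
    (Icc_subset_Ici_self : Icc 0 β ⊆ Ici 0)
  have hzero : ∫ ω, (X ω ^ (0 : ℝ) + Y ω ^ (0 : ℝ)) ∂P = 2 := by norm_num
  obtain ⟨α, hα, hα1⟩ := intermediate_value_Ioo' hβ.le hcont ⟨hβ1, by simp only [hzero]; norm_num⟩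
  refine ⟨α, hα, hα1, fun α' hα' h => hanti.injOn hα'.1.le hα.1.le (h.trans hα1.symm),
    fun γ hγ => hα1 ▸ hanti hα.1.le (mul_pos hα.1 (one_pos.trans hγ)).le
      (lt_mul_of_one_lt_right hα.1 hγ)⟩

end Moments

noncomputable def rMinus (δ ψ : ℝ) : ℝ := (√2)⁻¹ * (1 - δ) * √(1 - cos ψ)

noncomputable def rPlus (δ ψ : ℝ) : ℝ := (√2)⁻¹ * √((1 + δ ^ 2) + (1 - δ ^ 2) * cos ψ)

theorem continuous_rMinus (δ : ℝ) : Continuous (rMinus δ) := by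
  unfold rMinus; fun_prop

theorem continuous_rPlus (δ : ℝ) : Continuous (rPlus δ) := by
  unfold rPlus; fun_prop

theorem cos_mem_Ioo_of_mem_Ioo {ψ : ℝ} (hψ : ψ ∈ Ioo 0 π) : cos ψ ∈ Ioo (-1) 1 := by
  constructor
  · simpa using cos_lt_cos_of_nonneg_of_le_pi hψ.1.le le_rfl hψ.2
  · simpa using cos_lt_cos_of_nonneg_of_le_pi le_rfl hψ.2.le hψ.1

theorem inv_sqrt_two_mul_sqrt_mem_Ioo {t : ℝ} (ht : t ∈ Ioo 0 2) : (√2)⁻¹ * √t ∈ Ioo 0 1 := by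
  have hsqrt2 : (0 : ℝ) < √2 := by positivity
  refine ⟨mul_pos (inv_pos.2 hsqrt2) (sqrt_pos.2 ht.1), ?_⟩
  rw [inv_mul_lt_iff₀ hsqrt2, mul_one]
  exact sqrt_lt_sqrt ht.1.le ht.2

theorem inv_sqrt_two_mul_sqrt_sq {t : ℝ} (ht : 0 ≤ t) : ((√2)⁻¹ * √t) ^ 2 = t / 2 := by
  rw [mul_pow, inv_pow, sq_sqrt zero_le_two, sq_sqrt ht, inv_mul_eq_div]

variable {δ ψ : ℝ}

theorem rMinus_mem_Ioo (hδ : δ ∈ Ico 0 1) (hψ : ψ ∈ Ioo 0 π) : rMinus δ ψ ∈ Ioo 0 1 := by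
  have hc := cos_mem_Ioo_of_mem_Ioo hψ
  obtain ⟨hpos, hlt⟩ :=
    inv_sqrt_two_mul_sqrt_mem_Ioo (t := 1 - cos ψ) ⟨by linarith [hc.2], by linarith [hc.1]⟩
  rw [rMinus, mul_right_comm, mul_comm _ (1 - δ)]
  exact ⟨mul_pos (by linarith [hδ.2]) hpos,
    mul_lt_one_of_nonneg_of_lt_one_right (by linarith [hδ.1]) hpos.le hlt⟩

-- The radicand is `(1 + cos ψ) + δ² (1 - cos ψ)`, which lies in `(0, 2)`.
theorem rPlus_mem_Ioo (hδ : δ ^ 2 < 1) (hψ : ψ ∈ Ioo 0 π) : rPlus δ ψ ∈ Ioo 0 1 := by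
  obtain ⟨hc₁, hc₂⟩ := cos_mem_Ioo_of_mem_Ioo hψ
  exact inv_sqrt_two_mul_sqrt_mem_Ioo ⟨by nlinarith, by nlinarith⟩

theorem rPlus_sq_add_rMinus_sq (δ ψ : ℝ) :
    rPlus δ ψ ^ 2 + rMinus δ ψ ^ 2 = 1 - δ * (1 - δ) * (1 - cos ψ) := by
  have hc₁ := neg_one_le_cos ψ
  have hc₂ := cos_le_one ψ
  rw [rPlus, rMinus, mul_right_comm, mul_pow (_ * _), inv_sqrt_two_mul_sqrt_sq (by nlinarith),
    inv_sqrt_two_mul_sqrt_sq (by linarith)]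
  ring

theorem rPlus_sq_add_rMinus_sq_lt_one (hδ : δ ∈ Ioo 0 1) (hψ : ψ ∈ Ioo 0 π) :
    rPlus δ ψ ^ 2 + rMinus δ ψ ^ 2 < 1 := by
  have hc := cos_mem_Ioo_of_mem_Ioo hψ
  rw [rPlus_sq_add_rMinus_sq, sub_lt_self_iff]
  exact mul_pos (mul_pos hδ.1 (sub_pos.2 hδ.2)) (sub_pos.2 hc.2)

theorem critical_exponent_inelastic_maxwell_general
    {Ω : Type*} [MeasurableSpace Ω] (P : Measure Ω) [IsProbabilityMeasure P]
    (δ : ℝ) (hδ : δ ∈ Set.Ioo (0 : ℝ) (1/2))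
    (ψ : Ω → ℝ) (hψ_meas : Measurable ψ)
    (hψ_range : ∀ᵐ ω ∂P, ψ ω ∈ Set.Ioo 0 π)
    (rm rp : Ω → ℝ)
    (hrm : ∀ ω, rm ω = (Real.sqrt 2)⁻¹ * (1 - δ) * Real.sqrt (1 - Real.cos (ψ ω)))
    (hrp : ∀ ω, rp ω = (Real.sqrt 2)⁻¹ *
      Real.sqrt ((1 + δ ^ 2) + (1 - δ ^ 2) * Real.cos (ψ ω))) :
    ∃ α : ℝ, α ∈ Set.Ioo (0 : ℝ) 2 ∧
      (∫ ω, (rp ω ^ α + rm ω ^ α) ∂P) = 1 ∧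
      (∀ α' : ℝ, α' ∈ Set.Ioo (0 : ℝ) 2 → (∫ ω, (rp ω ^ α' + rm ω ^ α') ∂P) = 1 → α' = α) ∧
      (∀ γ : ℝ, 1 < γ → (∫ ω, (rp ω ^ (α * γ) + rm ω ^ (α * γ)) ∂P) < 1) := by
  have hδ₁ : δ ∈ Ioo 0 1 := ⟨hδ.1, by linarith [hδ.2]⟩
  obtain rfl : rm = fun ω => rMinus δ (ψ ω) := funext hrm
  obtain rfl : rp = fun ω => rPlus δ (ψ ω) := funext hrp
  have hrm_meas := ((continuous_rMinus δ).measurable.comp hψ_meas).aemeasurable (μ := P)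
  have hrp_meas := ((continuous_rPlus δ).measurable.comp hψ_meas).aemeasurable (μ := P)
  have hrm01 : ∀ᵐ ω ∂P, rMinus δ (ψ ω) ∈ Ioo 0 1 :=
    hψ_range.mono fun ω => rMinus_mem_Ioo (Ioo_subset_Ico_self hδ₁)
  have hrp01 : ∀ᵐ ω ∂P, rPlus δ (ψ ω) ∈ Ioo 0 1 :=
    hψ_range.mono fun ω => rPlus_mem_Ioo (by nlinarith [hδ₁.1, hδ₁.2])
  refine exists_unique_critical_exponent hrp_meas hrm_meas hrp01 hrm01 two_pos ?_
  calc ∫ ω, (rPlus δ (ψ ω) ^ (2 : ℝ) + rMinus δ (ψ ω) ^ (2 : ℝ)) ∂P < ∫ _, (1 : ℝ) ∂P :=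
        integral_lt_integral_of_ae_lt
          (integrable_rpow_add_rpow hrp_meas hrm_meas hrp01 hrm01 zero_le_two)
          (integrable_const 1) (hψ_range.mono fun ω hω => by
            simpa only [rpow_two] using rPlus_sq_add_rMinus_sq_lt_one hδ₁ hω)
    _ = 1 := by simp

/-- **Existence of the critical exponent for inelastic Maxwell molecules.**
Let `δ ∈ (0,1/2)` and `ψ` a random angle in `(0,π)` with absolutely continuous law.
With `r⁻ = 2^{-1/2}(1-δ)√(1-cos ψ)` and `r⁺ = 2^{-1/2}√((1+δ²)+(1-δ²)cos ψ)`,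
there is a unique `α ∈ (0,2)` with `E[(r⁺)^α + (r⁻)^α] = 1`; moreover for this `α`
and every `γ > 1` one has `E[(r⁺)^{αγ} + (r⁻)^{αγ}] < 1`. -/
theorem critical_exponent_inelastic_maxwell
    {Ω : Type*} [MeasurableSpace Ω] (P : Measure Ω) [IsProbabilityMeasure P]
    (δ : ℝ) (hδ : δ ∈ Set.Ioo (0 : ℝ) (1/2))
    (ψ : Ω → ℝ) (hψ_meas : Measurable ψ)
    (hψ_range : ∀ᵐ ω ∂P, ψ ω ∈ Set.Ioo 0 π)
    (hψ_ac : Measure.map ψ P ≪ (volume : Measure ℝ))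
    (rm rp : Ω → ℝ)
    (hrm : ∀ ω, rm ω = (Real.sqrt 2)⁻¹ * (1 - δ) * Real.sqrt (1 - Real.cos (ψ ω)))
    (hrp : ∀ ω, rp ω = (Real.sqrt 2)⁻¹ *
      Real.sqrt ((1 + δ ^ 2) + (1 - δ ^ 2) * Real.cos (ψ ω))) :
    ∃ α : ℝ, α ∈ Set.Ioo (0 : ℝ) 2 ∧
      (∫ ω, (rp ω ^ α + rm ω ^ α) ∂P) = 1 ∧
      (∀ α' : ℝ, α' ∈ Set.Ioo (0 : ℝ) 2 → (∫ ω, (rp ω ^ α' + rm ω ^ α') ∂P) = 1 → α' = α) ∧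
      (∀ γ : ℝ, 1 < γ → (∫ ω, (rp ω ^ (α * γ) + rm ω ^ (α * γ)) ∂P) < 1) :=
  critical_exponent_inelastic_maxwell_general P δ hδ ψ hψ_meas hψ_range rm rp hrm hrp
end

section
/- Absolute continuity with respect to Haar measure (abstract form of Lemma 3.5): Let d ≥ 3. Suppose U₁, U₂ are random elements with values in the subgroup SO(d−1) of SO(d) fixing e_d and ψ* is a random angle with values in [0,π], such that U₁, U₂, ψ* are independent, ψ* has a continuous probability density which is strictly positive on (0,π), and the law of U₁ Z_{ψ*} U₂ is the normalized Haar measure on SO(d). Let ψ̃ be a random variable with values in (0,π) whose law has a density with respect to Lebesgue measure, with ψ̃ independent of (U₁, U₂). Then the law of the random rotation U₁ Z_{ψ̃} U₂ is absolutely continuous with respect to the Haar measure on SO(d). -/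
open MeasureTheory ProbabilityTheory Matrix Real Set

noncomputable instance matMeasurableSpace {d : ℕ} :
    MeasurableSpace (Matrix (Fin d) (Fin d) ℝ) :=
  inferInstanceAs (MeasurableSpace (Fin d → Fin d → ℝ))

/-- The "last" standard unit vector `e_d = (0,…,0,1)` of `ℝ^d`. -/
def eLast (d : ℕ) : Fin d → ℝ := fun i => if (i : ℕ) = d - 1 then 1 else 0

/-- Membership in the subgroup `SO(d-1)` of `SO(d)` fixing `e_d`. -/
def memSOfix (d : ℕ) (A : Matrix (Fin d) (Fin d) ℝ) : Prop :=
  A ∈ Matrix.specialOrthogonalGroup (Fin d) ℝ ∧ A *ᵥ eLast d = eLast d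

/-- The rotation `Z_ψ` by the angle `ψ` in the `e₁`–`e_d` plane. -/
noncomputable def Zmat (d : ℕ) (ψ : ℝ) : Matrix (Fin d) (Fin d) ℝ :=
  Matrix.of fun i j =>
    if (i : ℕ) = 0 ∧ (j : ℕ) = 0 then Real.cos ψ
    else if (i : ℕ) = 0 ∧ (j : ℕ) = d - 1 then -Real.sin ψ
    else if (i : ℕ) = d - 1 ∧ (j : ℕ) = 0 then Real.sin ψ
    else if (i : ℕ) = d - 1 ∧ (j : ℕ) = d - 1 then Real.cos ψ
    else if i = j then 1 else 0

/-!
Both random rotations are images of a product law, (law of the angle) ⊗ (law of `(U₁, U₂)`),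
under the continuous map `(ψ, A, B) ↦ A * Z_ψ * B`, the product coming from independence. The
density of `ψ*` vanishes nowhere on `(0, π)`, so the law of `ψ̃` is absolutely continuous
with respect to that of `ψ*`; this passes to the product laws and then to their images, the
second of which is `𝔥`.
-/

instance matBorelSpace {d : ℕ} : BorelSpace (Matrix (Fin d) (Fin d) ℝ) :=
  inferInstanceAs (BorelSpace (Fin d → Fin d → ℝ))

instance matSecondCountableTopology {d : ℕ} :
    SecondCountableTopology (Matrix (Fin d) (Fin d) ℝ) :=
  inferInstanceAs (SecondCountableTopology (Fin d → Fin d → ℝ))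

theorem continuous_Zmat (d : ℕ) : Continuous (Zmat d) := by
  refine continuous_matrix fun i j => ?_
  simp only [Zmat, Matrix.of_apply]
  exact continuous_cos.if_const _ (continuous_sin.neg.if_const _
    (continuous_sin.if_const _ (continuous_cos.if_const _ continuous_const)))

theorem measurable_mul_Zmat_mul (d : ℕ) :
    Measurable fun q : ℝ × Matrix (Fin d) (Fin d) ℝ × Matrix (Fin d) (Fin d) ℝ =>
      q.2.1 * Zmat d q.1 * q.2.2 :=
  ((continuous_fst.comp continuous_snd).matrix_mul ((continuous_Zmat d).comp continuous_fst)
    |>.matrix_mul (continuous_snd.comp continuous_snd)).measurable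

theorem absolutelyContinuous_map_of_indepFun {Ω α β γ : Type*} [MeasurableSpace Ω]
    [MeasurableSpace α] [MeasurableSpace β] [MeasurableSpace γ]
    {P : Measure Ω} [IsFiniteMeasure P] {X X' : Ω → α} {Y : Ω → β} {f : α × β → γ}
    (hf : Measurable f) (hX : Measurable X) (hX' : Measurable X') (hY : Measurable Y)
    (hXY : IndepFun X Y P) (hX'Y : IndepFun X' Y P) (hac : P.map X ≪ P.map X') :
    P.map (fun ω => f (X ω, Y ω)) ≪ P.map (fun ω => f (X' ω, Y ω)) := by
  have law_eq {Z : Ω → α} (hZ : Measurable Z) (hZY : IndepFun Z Y P) :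
      P.map (fun ω => f (Z ω, Y ω)) = ((P.map Z).prod (P.map Y)).map f := by
    rw [← hZY.map_prod_eq_prod_map_map hZ.aemeasurable hY.aemeasurable,
      Measure.map_map hf (hZ.prodMk hY)]
    rfl
  rw [law_eq hX hXY, law_eq hX' hX'Y]
  exact (hac.prod Measure.AbsolutelyContinuous.rfl).map hf

theorem absolutelyContinuous_withDensity_of_pos_on_Ioo {μ : Measure ℝ} {a b : ℝ} {f : ℝ → ℝ}
    (hf : AEMeasurable f (volume.restrict (Icc a b))) (hf_pos : ∀ x ∈ Ioo a b, 0 < f x)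
    (hμ : μ ≪ volume) (hμ_supp : ∀ᵐ x ∂μ, x ∈ Icc a b) :
    μ ≪ (volume.restrict (Icc a b)).withDensity fun x => ENNReal.ofReal (f x) := by
  have hf_ne_zero : ∀ᵐ x ∂volume.restrict (Icc a b), ENNReal.ofReal (f x) ≠ 0 := by
    rw [Measure.restrict_congr_set Ioo_ae_eq_Icc.symm]
    exact (ae_restrict_mem measurableSet_Ioo).mono fun x hx =>
      (ENNReal.ofReal_pos.mpr (hf_pos x hx)).ne'
  rw [← Measure.restrict_eq_self_of_ae_mem hμ_supp]
  exact (hμ.restrict _).trans (withDensity_absolutelyContinuous' hf.ennreal_ofReal hf_ne_zero)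

theorem abs_continuity_wrt_haar_general
    {d : ℕ}
    {Ω : Type*} [MeasurableSpace Ω] (P : Measure Ω) [IsProbabilityMeasure P]
    (𝔥 : Measure (Matrix (Fin d) (Fin d) ℝ))
    (U₁ U₂ : Ω → Matrix (Fin d) (Fin d) ℝ) (ψst ψt : Ω → ℝ)
    (hU₁_meas : Measurable U₁) (hU₂_meas : Measurable U₂)
    (hψst_meas : Measurable ψst) (hψt_meas : Measurable ψt)
    -- U₁, U₂, ψ* mutually independent
    (hindep₁ : IndepFun ψst (fun ω => (U₁ ω, U₂ ω)) P)
    -- ψ* has a continuous density, strictly positive on (0,π)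
    (hψst_density : ∃ f : ℝ → ℝ, ContinuousOn f (Set.Icc 0 π) ∧
      (∀ x ∈ Set.Ioo 0 π, 0 < f x) ∧
      Measure.map ψst P
        = (volume.restrict (Set.Icc (0 : ℝ) π)).withDensity
            (fun x => ENNReal.ofReal (f x)))
    -- the law of U₁ Z_{ψ*} U₂ is the Haar measure on SO(d)
    (hhaar : Measure.map (fun ω => U₁ ω * Zmat d (ψst ω) * U₂ ω) P = 𝔥)
    -- ψ̃ takes values in (0,π), has absolutely continuous law
    (hψt_range : ∀ ω, ψt ω ∈ Set.Ioo 0 π)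
    (hψt_ac : Measure.map ψt P ≪ (volume : Measure ℝ))
    -- ψ̃ independent of (U₁, U₂)
    (hindep₃ : IndepFun ψt (fun ω => (U₁ ω, U₂ ω)) P) :
    Measure.map (fun ω => U₁ ω * Zmat d (ψt ω) * U₂ ω) P ≪ 𝔥 := by
  obtain ⟨f, hf_cont, hf_pos, hψst_law⟩ := hψst_density
  have hψt_supp : ∀ᵐ x ∂P.map ψt, x ∈ Icc 0 π :=
    (ae_map_iff hψt_meas.aemeasurable measurableSet_Icc).2
      (ae_of_all _ fun ω => Ioo_subset_Icc_self (hψt_range ω))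
  have hac : P.map ψt ≪ P.map ψst := by
    rw [hψst_law]
    exact absolutelyContinuous_withDensity_of_pos_on_Ioo
      (hf_cont.aemeasurable measurableSet_Icc) hf_pos hψt_ac hψt_supp
  rw [← hhaar]
  exact absolutelyContinuous_map_of_indepFun (f := fun q => q.2.1 * Zmat d q.1 * q.2.2)
    (measurable_mul_Zmat_mul d) hψt_meas hψst_meas
    (hU₁_meas.prodMk hU₂_meas) hindep₃ hindep₁ hac

/-- **Absolute continuity with respect to Haar measure (abstract Lemma 3.5).** If the
independent triple `(U₁, U₂, ψ*)` realizes the Haar measure on `SO(d)` as the law of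
`U₁ Z_{ψ*} U₂` (with `ψ*` having a continuous density positive on `(0,π)`), and `ψ̃`
is a `(0,π)`-valued random angle with absolutely continuous law, independent of
`(U₁, U₂)`, then the law of `U₁ Z_{ψ̃} U₂` is absolutely continuous with respect to
the Haar measure on `SO(d)`. -/
theorem abs_continuity_wrt_haar
    {d : ℕ} (hd : 3 ≤ d)
    {Ω : Type*} [MeasurableSpace Ω] (P : Measure Ω) [IsProbabilityMeasure P]
    (𝔥 : Measure (Matrix (Fin d) (Fin d) ℝ)) [IsProbabilityMeasure 𝔥]
    (h𝔥_supp : 𝔥 {A | A ∉ Matrix.specialOrthogonalGroup (Fin d) ℝ} = 0)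
    (h𝔥_linv : ∀ G ∈ Matrix.specialOrthogonalGroup (Fin d) ℝ,
      Measure.map (fun A => G * A) 𝔥 = 𝔥)
    (h𝔥_rinv : ∀ G ∈ Matrix.specialOrthogonalGroup (Fin d) ℝ,
      Measure.map (fun A => A * G) 𝔥 = 𝔥)
    (U₁ U₂ : Ω → Matrix (Fin d) (Fin d) ℝ) (ψst ψt : Ω → ℝ)
    (hU₁_meas : Measurable U₁) (hU₂_meas : Measurable U₂)
    (hψst_meas : Measurable ψst) (hψt_meas : Measurable ψt)
    (hU₁_mem : ∀ ω, memSOfix d (U₁ ω)) (hU₂_mem : ∀ ω, memSOfix d (U₂ ω))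
    -- U₁, U₂, ψ* mutually independent
    (hindep₁ : IndepFun ψst (fun ω => (U₁ ω, U₂ ω)) P)
    (hindep₂ : IndepFun U₁ U₂ P)
    -- ψ* has a continuous density, strictly positive on (0,π)
    (hψst_range : ∀ ω, ψst ω ∈ Set.Icc 0 π)
    (hψst_density : ∃ f : ℝ → ℝ, ContinuousOn f (Set.Icc 0 π) ∧
      (∀ x ∈ Set.Ioo 0 π, 0 < f x) ∧
      Measure.map ψst P
        = (volume.restrict (Set.Icc (0 : ℝ) π)).withDensity
            (fun x => ENNReal.ofReal (f x)))
    -- the law of U₁ Z_{ψ*} U₂ is the Haar measure on SO(d)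
    (hhaar : Measure.map (fun ω => U₁ ω * Zmat d (ψst ω) * U₂ ω) P = 𝔥)
    -- ψ̃ takes values in (0,π), has absolutely continuous law
    (hψt_range : ∀ ω, ψt ω ∈ Set.Ioo 0 π)
    (hψt_ac : Measure.map ψt P ≪ (volume : Measure ℝ))
    -- ψ̃ independent of (U₁, U₂)
    (hindep₃ : IndepFun ψt (fun ω => (U₁ ω, U₂ ω)) P) :
    Measure.map (fun ω => U₁ ω * Zmat d (ψt ω) * U₂ ω) P ≪ 𝔥 :=
  abs_continuity_wrt_haar_general P 𝔥 U₁ U₂ ψst ψt hU₁_meas hU₂_meas hψst_meas hψt_meas hindep₁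
    hψst_density hhaar hψt_range hψt_ac hindep₃
end

section
/- Convolution contraction under a Haar minorization: Let G be a compact Hausdorff, second-countable topological group with normalized Haar probability measure 𝔥, let c ∈ (0,1], and let β be a Borel probability measure on G with β(B) ≥ c 𝔥(B) for every Borel set B ⊆ G. Then for every f ∈ L²(G, 𝔥) with ∫_G f d𝔥 = 0, the function g ↦ ∫_G f(g x) β(dx) has L²(G, 𝔥)-norm at most (1−c) ‖f‖_{L²(G,𝔥)}. -/
/-!
The minorization splits `β = ν + c • 𝔥` with `ν` a measure of mass `1 - c`. Averaging a mean-zero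
`f` over left translates against `𝔥` gives `0`, so only `ν` contributes. Since a Haar probability
measure is also right-invariant, the image of `𝔥 ⊗ ν` under `(g, x) ↦ g * x` is `ν(G) • 𝔥`;
Hölder's inequality in `x` followed by Tonelli in `(g, x)` then bounds the `L^p` norm of
`g ↦ ∫ f(g x) dν(x)` by `ν(G) ‖f‖_p`.
-/

open MeasureTheory Measure Set
open scoped ENNReal NNReal

namespace MeasureTheory

lemma enorm_integral_rpow_le {α E : Type*} [MeasurableSpace α] {μ : Measure α}
    [IsFiniteMeasure μ] [NormedAddCommGroup E] [NormedSpace ℝ E] {F : α → E}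
    (hF : AEStronglyMeasurable F μ) {p : ℝ≥0} (hp : 1 ≤ p) :
    ‖∫ x, F x ∂μ‖ₑ ^ (p : ℝ) ≤ μ univ ^ ((p : ℝ) - 1) * ∫⁻ x, ‖F x‖ₑ ^ (p : ℝ) ∂μ := by
  have holder := eLpNorm_le_eLpNorm_mul_rpow_measure_univ (p := 1) (q := p)
    (by exact_mod_cast hp) hF
  rw [eLpNorm_one_eq_lintegral_enorm] at holder
  calc ‖∫ x, F x ∂μ‖ₑ ^ (p : ℝ)
      ≤ (eLpNorm F p μ * μ univ ^ (1 - 1 / (p : ℝ))) ^ (p : ℝ) := by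
        gcongr
        exact (enorm_integral_le_lintegral_enorm F).trans (by simpa using holder)
    _ = μ univ ^ ((p : ℝ) - 1) * ∫⁻ x, ‖F x‖ₑ ^ (p : ℝ) ∂μ := by
        rw [ENNReal.mul_rpow_of_nonneg _ _ (by positivity),
          eLpNorm_nnreal_pow_eq_lintegral (by positivity), ← ENNReal.rpow_mul, mul_comm]
        congr 2
        field_simp

namespace Measure

variable {G : Type*} [Group G] [MeasurableSpace G]

lemma isMulRightInvariant_of_isProbabilityMeasure [TopologicalSpace G] [IsTopologicalGroup G]
    [LocallyCompactSpace G] [BorelSpace G] (μ : Measure G) [μ.IsHaarMeasure]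
    [IsProbabilityMeasure μ] : μ.IsMulRightInvariant where
  map_mul_right_eq_self g := by
    have : IsProbabilityMeasure (μ.map (· * g)) :=
      isProbabilityMeasure_map (measurable_mul_const g).aemeasurable
    exact isHaarMeasure_eq_of_isProbabilityMeasure _ μ

section Convolution

variable [MeasurableMul₂ G] (μ ν : Measure G) [μ.IsMulRightInvariant] [SFinite μ] [SFinite ν]

lemma mconv_eq_smul_of_isMulRightInvariant : μ ∗ₘ ν = ν univ • μ := by
  ext s hs
  rw [mconv, map_apply measurable_mul hs, prod_apply_symm (measurable_mul hs)]
  simp_rw [preimage_preimage, measure_preimage_mul_right, lintegral_const, smul_apply,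
    smul_eq_mul, mul_comm]

lemma quasiMeasurePreserving_mul_prod :
    QuasiMeasurePreserving (fun p : G × G => p.1 * p.2) (μ.prod ν) μ where
  measurable := measurable_mul
  absolutelyContinuous := by
    rw [← mconv, mconv_eq_smul_of_isMulRightInvariant]
    exact smul_absolutelyContinuous

variable {μ ν} {E : Type*} [NormedAddCommGroup E]

lemma ae_integrable_comp_mul [IsFiniteMeasure ν] {f : G → E} (hf : Integrable f μ) :
    ∀ᵐ g ∂μ, Integrable (fun x => f (g * x)) ν := by
  have hmap : (μ.prod ν).map (fun p : G × G => p.1 * p.2) = ν univ • μ :=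
    mconv_eq_smul_of_isMulRightInvariant μ ν
  have hprod : Integrable (fun p : G × G => f (p.1 * p.2)) (μ.prod ν) := by
    rw [← Function.comp_def, ← integrable_map_measure _ measurable_mul.aemeasurable, hmap]
    · exact hf.smul_measure (measure_ne_top ν univ)
    · rw [hmap]; exact hf.aestronglyMeasurable.smul_measure _
  exact hprod.prod_right_ae

lemma ae_integral_comp_mul_add_smul_eq [μ.IsMulLeftInvariant] [IsFiniteMeasure ν]
    [NormedSpace ℝ E] {f : G → E} (hf : Integrable f μ) (hf0 : ∫ x, f x ∂μ = 0) {a : ℝ≥0∞}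
    (ha : a ≠ ∞) :
    ∀ᵐ g ∂μ, ∫ x, f (g * x) ∂(ν + a • μ) = ∫ x, f (g * x) ∂ν := by
  filter_upwards [ae_integrable_comp_mul (ν := ν) hf] with g hg
  rw [integral_add_measure hg ((hf.comp_mul_left g).smul_measure ha), integral_smul_measure,
    integral_mul_left_eq_self (μ := μ), hf0, smul_zero, add_zero]

lemma lintegral_lintegral_comp_mul {u : G → ℝ≥0∞} (hu : AEMeasurable u μ) :
    ∫⁻ g, ∫⁻ x, u (g * x) ∂ν ∂μ = ν univ * ∫⁻ g, u g ∂μ := by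
  have hmap : (μ.prod ν).map (fun p : G × G => p.1 * p.2) = ν univ • μ :=
    mconv_eq_smul_of_isMulRightInvariant μ ν
  have hu' : AEMeasurable (fun p : G × G => u (p.1 * p.2)) (μ.prod ν) :=
    hu.comp_quasiMeasurePreserving (quasiMeasurePreserving_mul_prod μ ν)
  rw [← lintegral_prod _ hu',
    ← lintegral_map' (by rw [hmap]; exact hu.smul_measure _) measurable_mul.aemeasurable, hmap,
    lintegral_smul_measure, smul_eq_mul]

lemma eLpNorm_integral_comp_mul_le [IsFiniteMeasure ν] [NormedSpace ℝ E] {f : G → E}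
    (hf : AEStronglyMeasurable f μ) {p : ℝ≥0∞} (hp : 1 ≤ p) (hp_top : p ≠ ∞) :
    eLpNorm (fun g => ∫ x, f (g * x) ∂ν) p μ ≤ ν univ * eLpNorm f p μ := by
  lift p to ℝ≥0 using hp_top
  replace hp : 1 ≤ p := by exact_mod_cast hp
  have hp0 : p ≠ 0 := (zero_lt_one.trans_le hp).ne'
  have hp1 : 0 ≤ (p : ℝ) - 1 := sub_nonneg.2 (by exact_mod_cast hp)
  have hpow : ν univ ^ ((p : ℝ) - 1) * ν univ = ν univ ^ (p : ℝ) := by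
    simpa using (ENNReal.rpow_add_of_nonneg (x := ν univ) _ _ hp1 zero_le_one).symm
  have hF := (hf.comp_quasiMeasurePreserving (quasiMeasurePreserving_mul_prod μ ν)).prodMk_left
  rw [← ENNReal.rpow_le_rpow_iff (by positivity : (0 : ℝ) < p),
    ENNReal.mul_rpow_of_nonneg _ _ (by positivity), eLpNorm_nnreal_pow_eq_lintegral hp0,
    eLpNorm_nnreal_pow_eq_lintegral hp0]
  calc ∫⁻ g, ‖∫ x, f (g * x) ∂ν‖ₑ ^ (p : ℝ) ∂μ
      ≤ ∫⁻ g, ν univ ^ ((p : ℝ) - 1) * ∫⁻ x, ‖f (g * x)‖ₑ ^ (p : ℝ) ∂ν ∂μ :=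
        lintegral_mono_ae (hF.mono fun g hg => enorm_integral_rpow_le hg hp)
    _ = ν univ ^ ((p : ℝ) - 1) * (ν univ * ∫⁻ g, ‖f g‖ₑ ^ (p : ℝ) ∂μ) := by
        rw [lintegral_const_mul' _ _ (ENNReal.rpow_ne_top_of_nonneg hp1 (measure_ne_top ν univ)),
          lintegral_lintegral_comp_mul (hf.enorm.pow_const _)]
    _ = ν univ ^ (p : ℝ) * ∫⁻ g, ‖f g‖ₑ ^ (p : ℝ) ∂μ := by
        rw [← hpow, mul_assoc]

end Convolution

end Measure

end MeasureTheory

theorem convolution_contraction_of_minorization_general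
    {G : Type*} [Group G] [TopologicalSpace G] [IsTopologicalGroup G]
    [CompactSpace G] [SecondCountableTopology G]
    [MeasurableSpace G] [BorelSpace G]
    (𝔥 : Measure G) [𝔥.IsHaarMeasure] [IsProbabilityMeasure 𝔥]
    (c : ℝ)
    (β : Measure G) [IsProbabilityMeasure β]
    (hβ : ∀ B : Set G, MeasurableSet B → ENNReal.ofReal c * 𝔥 B ≤ β B) :
    ∀ f : G → ℝ, MemLp f 2 𝔥 → (∫ g, f g ∂𝔥) = 0 →
      eLpNorm (fun g => ∫ x, f (g * x) ∂β) 2 𝔥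
        ≤ ENNReal.ofReal (1 - c) * eLpNorm f 2 𝔥 := by
  intro f hf hmean
  have := isMulRightInvariant_of_isProbabilityMeasure 𝔥
  have hle : ENNReal.ofReal c • 𝔥 ≤ β := Measure.le_iff.2 hβ
  have := isFiniteMeasure_of_le β hle
  set ν := β - ENNReal.ofReal c • 𝔥
  have hβν : β = ν + ENNReal.ofReal c • 𝔥 := (sub_add_cancel_of_le hle).symm
  have hν : ν univ ≤ ENNReal.ofReal (1 - c) := by
    have hsum : ν univ + ENNReal.ofReal c = 1 := by simpa using (congrArg (· univ) hβν).symm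
    rw [ENNReal.eq_sub_of_add_eq ENNReal.ofReal_ne_top hsum, tsub_le_iff_right]
    simpa using ENNReal.ofReal_add_le (p := 1 - c) (q := c)
  calc eLpNorm (fun g => ∫ x, f (g * x) ∂β) 2 𝔥
      = eLpNorm (fun g => ∫ x, f (g * x) ∂ν) 2 𝔥 := by
        rw [hβν]
        exact eLpNorm_congr_ae <| ae_integral_comp_mul_add_smul_eq (hf.integrable one_le_two)
          hmean ENNReal.ofReal_ne_top
    _ ≤ ν univ * eLpNorm f 2 𝔥 :=
        eLpNorm_integral_comp_mul_le hf.aestronglyMeasurable one_le_two ENNReal.ofNat_ne_top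
    _ ≤ ENNReal.ofReal (1 - c) * eLpNorm f 2 𝔥 := by gcongr

/-- **Convolution contraction under a Haar minorization.** Let `G` be a compact,
Hausdorff, second-countable topological group with normalized Haar probability
measure `𝔥`, `c ∈ (0,1]`, and `β` a Borel probability measure with `β(B) ≥ c 𝔥(B)`
for all Borel `B`. Then for every mean-zero `f ∈ L²(G,𝔥)` the function
`g ↦ ∫ f(gx) β(dx)` has `L²`-norm at most `(1-c)‖f‖_{L²}`. -/
theorem convolution_contraction_of_minorization
    {G : Type*} [Group G] [TopologicalSpace G] [IsTopologicalGroup G]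
    [CompactSpace G] [T2Space G] [SecondCountableTopology G]
    [MeasurableSpace G] [BorelSpace G]
    (𝔥 : Measure G) [𝔥.IsHaarMeasure] [IsProbabilityMeasure 𝔥]
    (c : ℝ) (hc : c ∈ Set.Ioc (0 : ℝ) 1)
    (β : Measure G) [IsProbabilityMeasure β]
    (hβ : ∀ B : Set G, MeasurableSet B → ENNReal.ofReal c * 𝔥 B ≤ β B) :
    ∀ f : G → ℝ, MemLp f 2 𝔥 → (∫ g, f g ∂𝔥) = 0 →
      eLpNorm (fun g => ∫ x, f (g * x) ∂β) 2 𝔥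
        ≤ ENNReal.ofReal (1 - c) * eLpNorm f 2 𝔥 :=
  convolution_contraction_of_minorization_general 𝔥 c β hβ
end
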